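/- Fix a directed edge e and suppose ‖x‖_∞ = max_{ē∈E} |x_ē| < 1/(Δ−1), where Δ ≥ 2 is the maximum vertex degree of 𝒢. Then Σ_ℓ λ(ℓ)/|ℓ| taken over all rooted loops that visit −e at least once and never visit e equals Σ_ℓ λ(ℓ)/|ℓ| taken over all rooted loops that visit e at least once and never visit −e. -/

import Mathlib

open scoped BigOperators

/-- The straight line segment drawn for an (unordered) edge, given the
positions of the vertices in the complex plane. -/
def segOf {α : Type*} (pos : α → ℂ) : Sym2 α → Set ℂ :=
  Sym2.lift ⟨fun u v => segment ℝ (pos u) (pos v), fun u v => segment_symm ℝ (pos u) (pos v)⟩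

/-- A finite graph embedded in the complex plane: vertices are distinct points
of `ℂ`, edges are unordered pairs of distinct vertices drawn as straight line
segments which pairwise intersect only at common endpoints, and no vertex lies
on an edge which does not contain it. -/
structure PlaneGraph where
  V : Type
  fintypeV : Fintype V
  decEqV : DecidableEq V
  pos : V → ℂ
  pos_inj : Function.Injective pos
  E : Finset (Sym2 V)
  not_diag : ∀ e ∈ E, ¬ e.IsDiag
  edges_meet : ∀ e₁ ∈ E, ∀ e₂ ∈ E, e₁ ≠ e₂ → ∀ p : ℂ,
    p ∈ segOf pos e₁ → p ∈ segOf pos e₂ → ∃ w : V, w ∈ e₁ ∧ w ∈ e₂ ∧ p = pos w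
  vertex_on_edge : ∀ e ∈ E, ∀ w : V, pos w ∈ segOf pos e → w ∈ e

attribute [instance] PlaneGraph.fintypeV PlaneGraph.decEqV

namespace PlaneGraph

variable (G : PlaneGraph)

/-- A directed edge: an ordered pair of vertices whose underlying
unordered pair is an edge of the graph. -/
abbrev DEdge : Type := {p : G.V × G.V // s(p.1, p.2) ∈ G.E}

/-- The reversal `-e` of a directed edge. -/
def rev (e : G.DEdge) : G.DEdge :=
  ⟨(e.val.2, e.val.1), by rw [Sym2.eq_swap]; exact e.property⟩

/-- The undirected version `ē` of a directed edge. -/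
def undir (e : G.DEdge) : Sym2 G.V := s(e.val.1, e.val.2)

/-- The turning angle `∠(e,g) = Arg((h_g - t_g)/(h_e - t_e)) ∈ (-π, π]`. -/
noncomputable def tangle (e g : G.DEdge) : ℝ :=
  Complex.arg ((G.pos g.val.2 - G.pos g.val.1) / (G.pos e.val.2 - G.pos e.val.1))

/-- The Kac–Ward transition matrix `Λ`, indexed by directed edges. -/
noncomputable def transMatrix (x : Sym2 G.V → ℝ) : Matrix G.DEdge G.DEdge ℂ :=
  fun e g =>
    if e.val.2 = g.val.1 ∧ g ≠ G.rev e then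
      (x (G.undir e) : ℂ) * Complex.exp (Complex.I / 2 * (G.tangle e g : ℂ))
    else 0

/-- A non-backtracking walk of length `n ≥ 1`, encoded as the list
`(w₁, …, w_{n+1})` of its `n+1` directed edges: consecutive edges are
incident head-to-tail and the walk never immediately reverses an edge. -/
def IsWalk (l : List G.DEdge) : Prop :=
  2 ≤ l.length ∧ l.Chain' (fun e g => e.val.2 = g.val.1 ∧ g ≠ G.rev e)

/-- The length `|w|` (number of steps) of a walk given as a list of edges. -/
def len (l : List G.DEdge) : ℕ := l.length - 1

/-- The weight `λ(w) = ∏_{i=1}^{n} Λ_{w_i, w_{i+1}}` of a walk. -/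
noncomputable def wlam (x : Sym2 G.V → ℝ) (l : List G.DEdge) : ℂ :=
  (List.zipWith (fun e g => G.transMatrix x e g) l l.tail).prod

/-- The edge weight `x(w) = ∏_{i=1}^{n} x_{\bar{w_i}}` of a walk
(the weight of the last edge is not included). -/
def wx (x : Sym2 G.V → ℝ) (l : List G.DEdge) : ℝ :=
  (l.dropLast.map (fun e => x (G.undir e))).prod

/-- The total turning angle `α(w) = Σ_{i=1}^{n} ∠(w_i, w_{i+1})` of a walk. -/
noncomputable def walpha (l : List G.DEdge) : ℝ :=
  (List.zipWith (fun e g => G.tangle e g) l l.tail).sum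

/-- The reversal `w⁻¹ = (-w_{n+1}, …, -w₁)` of a walk. -/
def wrev (l : List G.DEdge) : List G.DEdge := (l.map G.rev).reverse

/-- The concatenation `w ⊕ w'` of two walks, the first ending with the
directed edge with which the second starts. -/
def wconcat (l l' : List G.DEdge) : List G.DEdge := l ++ l'.tail

/-- A (rooted) loop: a walk of length at least `2` which starts and ends
with the same directed edge. -/
def IsLoop (l : List G.DEdge) : Prop :=
  G.IsWalk l ∧ 3 ≤ l.length ∧ l.head? = l.getLast?

/-- The number of times a loop `ℓ = (ℓ₁, …, ℓ_{n+1})` visits a directed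
edge `e`, i.e. the number of occurrences of `e` among `ℓ₁, …, ℓ_n`. -/
def visits (l : List G.DEdge) (e : G.DEdge) : ℕ := l.dropLast.count e

/-- A loop `ℓ` of length `n` is self-avoiding if each vertex appearing in it
appears in exactly two of the directed edges `ℓ₁, …, ℓ_n`. -/
def SelfAvoiding (l : List G.DEdge) : Prop :=
  G.IsLoop l ∧ ∀ v : G.V,
    l.dropLast.countP (fun e => decide (v = e.val.1 ∨ v = e.val.2)) ≠ 0 →
    l.dropLast.countP (fun e => decide (v = e.val.1 ∨ v = e.val.2)) = 2

/-- The degree of a vertex: the number of edges containing it. -/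
def degV (v : G.V) : ℕ := (G.E.filter (fun e => v ∈ e)).card

/-- A finite set of edges is even if every vertex belongs to an even number
of its edges. -/
def IsEvenSet (H : Finset (Sym2 G.V)) : Prop :=
  ∀ v : G.V, Even ((H.filter (fun e => v ∈ e)).card)

instance : DecidablePred G.IsEvenSet := fun H =>
  decidable_of_iff (∀ v : G.V, Even ((H.filter (fun e => v ∈ e)).card)) Iff.rfl

/-- The generating function `Z = Σ_{H even} ∏_{ē ∈ H} x_ē` of even
subgraphs. -/
def Z (x : Sym2 G.V → ℝ) : ℝ :=
  ∑ H ∈ G.E.powerset.filter G.IsEvenSet, ∏ e ∈ H, x e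

end PlaneGraph

/-!
Reversal `ℓ ↦ ℓ⁻¹` exchanges the two families of loops and preserves length, so it suffices that
`λ(ℓ⁻¹) = λ(ℓ)`. Write `λ(ℓ) = x(ℓ) e^{iα(ℓ)/2}`. A loop traverses the same undirected edges in
either direction, so `x(ℓ⁻¹) = x(ℓ)`. Since edges are straight segments meeting only at common
endpoints, two distinct edges at a vertex never leave it in the same direction; hence no
non-backtracking step turns by `π`, the turning angles of `ℓ⁻¹` are exactly the negatives of those
of `ℓ`, and `α(ℓ⁻¹) = -α(ℓ)`. Finally, a loop comes back to its initial direction, so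
`α(ℓ) ∈ 2πℤ` and `e^{-iα(ℓ)/2} = e^{iα(ℓ)/2}`.
-/

namespace List

theorem tail_perm_dropLast_of_head?_eq_getLast? {α : Type*} {l : List α}
    (h : l.head? = l.getLast?) : l.tail ~ l.dropLast := by
  match l, h with
  | [], _ => rfl
  | [_], _ => rfl
  | a :: b :: t, h =>
    have hlast : (b :: t).getLast (cons_ne_nil b t) = a := by
      simpa [getLast?_eq_some_getLast] using h.symm
    calc b :: t = (b :: t).dropLast ++ [a] := by rw [← hlast, dropLast_append_getLast]
      _ ~ a :: (b :: t).dropLast := perm_append_singleton _ _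
      _ = (a :: b :: t).dropLast := (dropLast_cons_of_ne_nil (cons_ne_nil b t)).symm

end List

theorem Complex.exp_I_div_two_mul_neg_of_coe_angle_eq_zero {θ : ℝ} (h : (θ : Real.Angle) = 0) :
    Complex.exp (Complex.I / 2 * ((-θ : ℝ) : ℂ)) = Complex.exp (Complex.I / 2 * θ) := by
  obtain ⟨n, rfl⟩ := Real.Angle.coe_eq_zero_iff.1 h
  have hfull : Complex.exp (Complex.I * ((n • (2 * Real.pi) : ℝ) : ℂ)) = 1 := by
    rw [← Complex.exp_int_mul_two_pi_mul_I n]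
    push_cast
    ring_nf
  rw [← mul_one (Complex.exp (Complex.I / 2 * _)), ← hfull, ← Complex.exp_add]
  push_cast
  ring_nf

namespace PlaneGraph

variable (G : PlaneGraph)

abbrev Step (e g : G.DEdge) : Prop := e.val.2 = g.val.1 ∧ g ≠ G.rev e

noncomputable def vec (e : G.DEdge) : ℂ := G.pos e.val.2 - G.pos e.val.1

lemma fst_ne_snd (e : G.DEdge) : e.val.1 ≠ e.val.2 := by
  simpa [Sym2.mk_isDiag_iff] using G.not_diag _ e.property

lemma vec_ne_zero (e : G.DEdge) : G.vec e ≠ 0 :=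
  sub_ne_zero.2 fun h => G.fst_ne_snd e (G.pos_inj h).symm

lemma vec_rev (e : G.DEdge) : G.vec (G.rev e) = -G.vec e :=
  (neg_sub _ _).symm

@[simp] lemma rev_rev (e : G.DEdge) : G.rev (G.rev e) = e := rfl

lemma rev_involutive : Function.Involutive G.rev := G.rev_rev

@[simp] lemma undir_rev (e : G.DEdge) : G.undir (G.rev e) = G.undir e :=
  Sym2.eq_swap

lemma tangle_eq_arg_div (e g : G.DEdge) : G.tangle e g = Complex.arg (G.vec g / G.vec e) := rfl

lemma eq_of_sameRay {v u w : G.V} (hu : s(v, u) ∈ G.E) (hw : s(v, w) ∈ G.E)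
    (h : SameRay ℝ (G.pos u - G.pos v) (G.pos w - G.pos v)) : u = w := by
  have between {a b : G.V} (ha : s(v, a) ∈ G.E) (hb : s(v, b) ∈ G.E)
      (hab : Wbtw ℝ (G.pos v) (G.pos b) (G.pos a)) : b = a := by
    have hmem : b ∈ s(v, a) :=
      G.vertex_on_edge _ ha b (by simpa [segOf, mem_segment_iff_wbtw] using hab)
    rcases Sym2.mem_iff.1 hmem with rfl | rfl
    · exact absurd (G.not_diag _ hb) (by simp)
    · rfl
  rw [← vsub_eq_sub, ← vsub_eq_sub] at h
  rcases wbtw_total_of_sameRay_vsub_left h with h' | h'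
  · exact between hw hu h'
  · exact (between hu hw h').symm

lemma arg_div_ne_pi_of_step {e g : G.DEdge} (h : G.Step e g) :
    Complex.arg (G.vec g / G.vec e) ≠ Real.pi := by
  intro hπ
  obtain ⟨hre, him⟩ := Complex.arg_eq_pi_iff.1 hπ
  have hray : SameRay ℝ (G.vec g) (G.vec (G.rev e)) := by
    rw [Complex.sameRay_iff_arg_div_eq_zero, vec_rev, div_neg, Complex.arg_eq_zero_iff]
    exact ⟨by simpa using hre.le, by simpa using him⟩
  have hgs : g.val.2 = e.val.1 := by
    refine G.eq_of_sameRay (v := e.val.2) ?_ ?_ (by simpa [vec, rev, h.1] using hray)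
    · rw [h.1]; exact g.property
    · rw [Sym2.eq_swap]; exact e.property
  exact h.2 (Subtype.ext (Prod.ext h.1.symm hgs))

lemma tangle_rev_rev {e g : G.DEdge} (h : G.Step e g) :
    G.tangle (G.rev g) (G.rev e) = -G.tangle e g := by
  rw [tangle_eq_arg_div, tangle_eq_arg_div, vec_rev, vec_rev, neg_div_neg_eq, ← inv_div,
    Complex.arg_inv, if_neg (G.arg_div_ne_pi_of_step h)]

lemma walpha_cons_cons (a b : G.DEdge) (t : List G.DEdge) :
    G.walpha (a :: b :: t) = G.tangle a b + G.walpha (b :: t) := by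
  simp [walpha]

lemma walpha_append_singleton : ∀ (l : List G.DEdge) (z y : G.DEdge),
    l.getLast? = some z → G.walpha (l ++ [y]) = G.walpha l + G.tangle z y
  | [], _, _, h => by simp at h
  | [a], _, _, h => by
    obtain rfl : a = _ := Option.some.inj h
    simp [walpha]
  | a :: b :: t, z, y, h => by
    rw [List.getLast?_cons_cons] at h
    have ih := walpha_append_singleton (b :: t) z y h
    rw [List.cons_append] at ih
    rw [List.cons_append, List.cons_append, walpha_cons_cons, ih, walpha_cons_cons]
    ring

lemma walpha_wrev : ∀ (l : List G.DEdge), l.IsChain G.Step →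
    G.walpha (G.wrev l) = -G.walpha l
  | [], _ => by simp [wrev, walpha]
  | [a], _ => by simp [wrev, walpha]
  | a :: b :: t, hc => by
    obtain ⟨hab, hc'⟩ := List.isChain_cons_cons.mp hc
    have hwrev : G.wrev (a :: b :: t) = G.wrev (b :: t) ++ [G.rev a] := by simp [wrev]
    have hlast : (G.wrev (b :: t)).getLast? = some (G.rev b) := by simp [wrev]
    rw [hwrev, G.walpha_append_singleton _ _ _ hlast, walpha_wrev (b :: t) hc',
      G.tangle_rev_rev hab, walpha_cons_cons]
    ring

lemma coe_walpha_cons (a : G.DEdge) (t : List G.DEdge) :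
    (G.walpha (a :: t) : Real.Angle) =
      Complex.arg (G.vec ((a :: t).getLast (List.cons_ne_nil a t))) - Complex.arg (G.vec a) := by
  induction t generalizing a with
  | nil => simp [walpha]
  | cons b t ih =>
    rw [walpha_cons_cons, Real.Angle.coe_add, ih, List.getLast_cons (List.cons_ne_nil b t),
      tangle_eq_arg_div, Complex.arg_div_coe_angle (G.vec_ne_zero b) (G.vec_ne_zero a)]
    abel

lemma coe_walpha_eq_zero_of_head?_eq_getLast? {l : List G.DEdge} (h : l.head? = l.getLast?) :
    (G.walpha l : Real.Angle) = 0 := by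
  match l, h with
  | [], _ => rfl
  | a :: t, hht =>
    have hlast : (a :: t).getLast (List.cons_ne_nil a t) = a := by
      simpa [List.getLast?_eq_some_getLast] using hht.symm
    rw [coe_walpha_cons, hlast, sub_self]

lemma wlam_eq_wx_mul_exp_walpha (x : Sym2 G.V → ℝ) : ∀ (l : List G.DEdge), l.IsChain G.Step →
    G.wlam x l = G.wx x l * Complex.exp (Complex.I / 2 * G.walpha l)
  | [], _ => by simp [wlam, wx, walpha]
  | [a], _ => by simp [wlam, wx, walpha]
  | a :: b :: t, hc => by
    obtain ⟨hab, hc'⟩ := List.isChain_cons_cons.mp hc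
    have hwlam : G.wlam x (a :: b :: t) = G.transMatrix x a b * G.wlam x (b :: t) := by
      simp [wlam]
    have hwx : G.wx x (a :: b :: t) = x (G.undir a) * G.wx x (b :: t) := by
      simp [wx]
    rw [hwlam, wlam_eq_wx_mul_exp_walpha x (b :: t) hc', hwx, walpha_cons_cons, transMatrix,
      if_pos hab]
    push_cast
    rw [mul_add, Complex.exp_add]
    ring

lemma wrev_involutive : Function.Involutive G.wrev := by
  intro l
  simp [wrev, Function.Involutive.comp_self G.rev_involutive]

lemma len_wrev (l : List G.DEdge) : G.len (G.wrev l) = G.len l := by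
  simp [len, wrev]

lemma dropLast_wrev_perm {l : List G.DEdge} (h : l.head? = l.getLast?) :
    (G.wrev l).dropLast.Perm (l.dropLast.map G.rev) := by
  rw [wrev, List.dropLast_reverse, ← List.map_tail]
  exact (List.reverse_perm _).trans ((List.tail_perm_dropLast_of_head?_eq_getLast? h).map G.rev)

lemma wx_wrev (x : Sym2 G.V → ℝ) {l : List G.DEdge} (h : l.head? = l.getLast?) :
    G.wx x (G.wrev l) = G.wx x l := by
  rw [wx, ((G.dropLast_wrev_perm h).map _).prod_eq, List.map_map]
  simp [wx, Function.comp_def]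

lemma visits_wrev {l : List G.DEdge} (h : l.head? = l.getLast?) (f : G.DEdge) :
    G.visits (G.wrev l) f = G.visits l (G.rev f) := by
  rw [visits, (G.dropLast_wrev_perm h).count_eq, visits, ← rev_rev G f,
    List.count_map_of_injective _ _ G.rev_involutive.injective, rev_rev]

lemma isLoop_wrev {l : List G.DEdge} (hl : G.IsLoop l) : G.IsLoop (G.wrev l) := by
  obtain ⟨⟨hlen, hchain⟩, hlen3, hht⟩ := hl
  refine ⟨⟨by simpa [wrev] using hlen, ?_⟩, by simpa [wrev] using hlen3, ?_⟩
  · change List.IsChain G.Step _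
    rw [wrev, List.isChain_reverse, List.isChain_map]
    refine hchain.imp fun a b hab => ⟨by simp [rev, hab.1], fun hba => hab.2 ?_⟩
    rw [hba, rev_rev]
  · rw [wrev, List.head?_reverse, List.getLast?_reverse, List.getLast?_map, List.head?_map, hht]

lemma isLoop_wrev_iff {l : List G.DEdge} : G.IsLoop (G.wrev l) ↔ G.IsLoop l :=
  ⟨fun h => G.wrev_involutive l ▸ G.isLoop_wrev h, G.isLoop_wrev⟩

lemma wlam_wrev (x : Sym2 G.V → ℝ) {l : List G.DEdge} (hl : G.IsLoop l) :
    G.wlam x (G.wrev l) = G.wlam x l := by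
  have hwinding := G.coe_walpha_eq_zero_of_head?_eq_getLast? hl.2.2
  rw [G.wlam_eq_wx_mul_exp_walpha x _ (G.isLoop_wrev hl).1.2,
    G.wlam_eq_wx_mul_exp_walpha x _ hl.1.2, G.wx_wrev x hl.2.2, G.walpha_wrev l hl.1.2,
    Complex.exp_I_div_two_mul_neg_of_coe_angle_eq_zero hwinding]

end PlaneGraph

theorem loop_sum_rev_eq_loop_sum_general (G : PlaneGraph) (x : Sym2 G.V → ℝ) (e : G.DEdge) :
    ∑' ℓ : {l : List G.DEdge //
        G.IsLoop l ∧ 1 ≤ G.visits l (G.rev e) ∧ G.visits l e = 0},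
      G.wlam x ℓ.val / (G.len ℓ.val : ℂ) =
    ∑' ℓ : {l : List G.DEdge //
        G.IsLoop l ∧ 1 ≤ G.visits l e ∧ G.visits l (G.rev e) = 0},
      G.wlam x ℓ.val / (G.len ℓ.val : ℂ) := by
  have hwrev : ∀ l, (G.IsLoop l ∧ 1 ≤ G.visits l (G.rev e) ∧ G.visits l e = 0) ↔
      (G.IsLoop (G.wrev l) ∧ 1 ≤ G.visits (G.wrev l) e ∧ G.visits (G.wrev l) (G.rev e) = 0) := by
    intro l
    rw [G.isLoop_wrev_iff]
    refine and_congr_right fun hl => ?_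
    rw [G.visits_wrev hl.2.2, G.visits_wrev hl.2.2, PlaneGraph.rev_rev]
  symm
  rw [← (G.wrev_involutive.toPerm.subtypeEquiv hwrev).tsum_eq]
  refine tsum_congr fun ℓ => ?_
  change G.wlam x (G.wrev ℓ.val) / (G.len (G.wrev ℓ.val) : ℂ) = _
  rw [G.wlam_wrev x ℓ.2.1, G.len_wrev]

/-- The signed measure of the loops visiting `-e` and not `e` equals the
signed measure of the loops visiting `e` and not `-e`. -/
theorem loop_sum_rev_eq_loop_sum (G : PlaneGraph) (x : Sym2 G.V → ℝ) (Δ : ℕ)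
    (hΔ : 2 ≤ Δ) (hdeg : ∀ v : G.V, G.degV v ≤ Δ)
    (hx : ∀ e ∈ G.E, |x e| < 1 / ((Δ : ℝ) - 1)) (e : G.DEdge) :
    ∑' ℓ : {l : List G.DEdge //
        G.IsLoop l ∧ 1 ≤ G.visits l (G.rev e) ∧ G.visits l e = 0},
      G.wlam x ℓ.val / (G.len ℓ.val : ℂ) =
    ∑' ℓ : {l : List G.DEdge //
        G.IsLoop l ∧ 1 ≤ G.visits l e ∧ G.visits l (G.rev e) = 0},
      G.wlam x ℓ.val / (G.len ℓ.val : ℂ) :=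
  loop_sum_rev_eq_loop_sum_general G x e
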